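/- Fix t > 0 and p ∈ (1, ∞). Let X be s-doubling for every s > 0 and satisfy property (∗)_t, let E ⊂ X be bounded, and let F ⊂ L^p(X) be bounded. Then for every ε > 0 there exists δ > 0 such that for all x, y ∈ E with d(x,y) < δ and all f ∈ F, |A_t f(x) − A_t f(y)| < ε. -/

import Mathlib

open MeasureTheory Metric Set ENNReal NNReal

lemma int_bound {X : Type*} [MeasurableSpace X] (μ : Measure X) {p : ℝ≥0∞} (hp1 : 1 ≤ p)
    {f : X → ℝ} (hf : AEStronglyMeasurable f μ) {C : ℝ≥0} (hC : eLpNorm f p μ ≤ C)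
    {e : ℝ} (he : e = 1 - 1/p.toReal) (he0 : 0 ≤ e)
    (A : Set X) (hA : μ A ≠ ⊤) :
    |∫ y in A, f y ∂μ| ≤ ((C : ℝ≥0∞) * μ A ^ e).toReal := by
  have hfr : AEStronglyMeasurable f (μ.restrict A) := hf.restrict
  have h1 : |∫ y in A, f y ∂μ| ≤ (eLpNorm f 1 (μ.restrict A)).toReal := by
    rw [eLpNorm_one_eq_lintegral_enorm]
    have := norm_integral_le_lintegral_norm (μ := μ.restrict A) f
    simp only [← ofReal_norm_eq_enorm, Real.norm_eq_abs]
    simpa [Real.norm_eq_abs] using this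
  have h2 : eLpNorm f 1 (μ.restrict A) ≤ (C : ℝ≥0∞) * μ A ^ e := by
    calc eLpNorm f 1 (μ.restrict A)
        ≤ eLpNorm f p (μ.restrict A) * (μ.restrict A) Set.univ ^ (1/(1:ℝ≥0∞).toReal - 1/p.toReal) :=
          eLpNorm_le_eLpNorm_mul_rpow_measure_univ hp1 hfr
      _ = eLpNorm f p (μ.restrict A) * μ A ^ e := by
          rw [Measure.restrict_apply_univ, he]; norm_num
      _ ≤ (C : ℝ≥0∞) * μ A ^ e := by
          gcongr
          exact (eLpNorm_mono_measure f Measure.restrict_le_self).trans hC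
  refine h1.trans (ENNReal.toReal_mono ?_ h2)
  exact ENNReal.mul_ne_top coe_ne_top (ENNReal.rpow_ne_top_of_nonneg he0 hA)

lemma doub_iter {X : Type*} [MetricSpace X] [MeasurableSpace X] (μ : Measure X)
    {t : ℝ} (ht : 0 < t)
    (hdoub : ∀ s : ℝ, 0 < s → ∃ γ : ℝ, 1 ≤ γ ∧
      ∀ x : X, μ (closedBall x (2 * s)) ≤ ENNReal.ofReal γ * μ (closedBall x s)) :
    ∀ k : ℕ, ∃ Γ : ℝ, 1 ≤ Γ ∧
      ∀ x : X, μ (closedBall x (2 ^ k * t)) ≤ ENNReal.ofReal Γ * μ (closedBall x t) := by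
  intro k
  induction k with
  | zero => exact ⟨1, le_rfl, fun x => by simp⟩
  | succ k ih =>
    obtain ⟨Γ, hΓ1, hΓ⟩ := ih
    obtain ⟨γ, hγ1, hγ⟩ := hdoub (2 ^ k * t) (by positivity)
    refine ⟨γ * Γ, by nlinarith, fun x => ?_⟩
    have h1 : (2 : ℝ) ^ (k+1) * t = 2 * (2 ^ k * t) := by ring
    calc μ (closedBall x (2 ^ (k+1) * t)) = μ (closedBall x (2 * (2 ^ k * t))) := by rw [h1]
      _ ≤ ENNReal.ofReal γ * μ (closedBall x (2 ^ k * t)) := hγ x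
      _ ≤ ENNReal.ofReal γ * (ENNReal.ofReal Γ * μ (closedBall x t)) := by gcongr; exact hΓ x
      _ = ENNReal.ofReal (γ * Γ) * μ (closedBall x t) := by
          rw [ENNReal.ofReal_mul (by linarith), mul_assoc]

noncomputable def avgOp {X : Type*} [MetricSpace X] [MeasurableSpace X]
    (μ : MeasureTheory.Measure X) (t : ℝ) (f : X → ℝ) (x : X) : ℝ :=
  (μ (Metric.closedBall x t)).toReal⁻¹ * ∫ y in Metric.closedBall x t, f y ∂μ

set_option maxHeartbeats 1000000 in
theorem stmt17 {X : Type*} [MetricSpace X] [MeasurableSpace X] (μ : Measure X)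
    (hball : ∀ (x : X) (u : ℝ), 0 < u → 0 < μ (closedBall x u) ∧ μ (closedBall x u) < ⊤)
    (t : ℝ) (ht : 0 < t) (p : ℝ≥0∞) (hp1 : 1 < p) (hp2 : p ≠ ⊤)
    (hdoub : ∀ s : ℝ, 0 < s → ∃ γ : ℝ, 1 ≤ γ ∧
      ∀ x : X, μ (closedBall x (2 * s)) ≤ ENNReal.ofReal γ * μ (closedBall x s))
    (hstart : ∀ ε : ℝ≥0∞, 0 < ε → ∃ δ : ℝ, 0 < δ ∧ ∀ x y : X, dist x y < δ →
      μ (symmDiff (closedBall x t) (closedBall y t)) < ε)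
    (E : Set X) (hE : Bornology.IsBounded E)
    (F : Set (X → ℝ)) (C : ℝ≥0)
    (hF : ∀ f ∈ F, MemLp f p μ ∧ eLpNorm f p μ ≤ C) :
    ∀ ε : ℝ, 0 < ε → ∃ δ : ℝ, 0 < δ ∧ ∀ x ∈ E, ∀ y ∈ E, dist x y < δ →
      ∀ f ∈ F, |avgOp μ t f x - avgOp μ t f y| < ε := by
  intro ε hε
  rcases Set.eq_empty_or_nonempty E with hEe | ⟨x₀, hx₀⟩
  · exact ⟨1, one_pos, fun x hx => by simp [hEe] at hx⟩
  obtain ⟨R, hR⟩ := hE.subset_closedBall x₀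
  have hR0 : 0 ≤ R := by have := hR hx₀; simpa using this
  obtain ⟨k, hk⟩ := pow_unbounded_of_one_lt ((R + t)/t) (one_lt_two (α := ℝ))
  have hkt : R + t ≤ 2 ^ k * t := by
    rw [div_lt_iff₀ ht] at hk; linarith
  obtain ⟨Γ, hΓ1, hΓ⟩ := doub_iter μ ht hdoub k
  set mlow : ℝ≥0∞ := μ (closedBall x₀ t) / ENNReal.ofReal Γ with hmlow
  have hΓ0 : ENNReal.ofReal Γ ≠ 0 := by
    simp only [ne_eq, ENNReal.ofReal_eq_zero, not_le]; linarith
  have mlow_pos : 0 < mlow := ENNReal.div_pos (hball x₀ t ht).1.ne' ENNReal.ofReal_ne_top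
  have mlow_ne_top : mlow ≠ ⊤ := (ENNReal.div_lt_top (hball x₀ t ht).2.ne hΓ0).ne
  have mlow_le : ∀ x ∈ E, mlow ≤ μ (closedBall x t) := by
    intro x hx
    have hxR : dist x x₀ ≤ R := by have := hR hx; simpa [mem_closedBall] using this
    have hsub : closedBall x₀ t ⊆ closedBall x (2 ^ k * t) := by
      intro z hz
      simp only [mem_closedBall] at *
      calc dist z x ≤ dist z x₀ + dist x₀ x := dist_triangle _ _ _
        _ ≤ t + R := add_le_add hz (by rwa [dist_comm])
        _ ≤ 2 ^ k * t := by linarith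
    have h1 : μ (closedBall x₀ t) ≤ μ (closedBall x t) * ENNReal.ofReal Γ := by
      rw [mul_comm]; exact (measure_mono hsub).trans (hΓ x)
    exact ENNReal.div_le_of_le_mul h1
  set Mb : ℝ≥0∞ := μ (closedBall x₀ (R + t)) with hMb
  have Mb_ne_top : Mb ≠ ⊤ := (hball x₀ (R+t) (by linarith)).2.ne
  have mh : ∀ x ∈ E, μ (closedBall x t) ≤ Mb := by
    intro x hx
    refine measure_mono fun z hz => ?_
    have hxR : dist x x₀ ≤ R := by have := hR hx; simpa [mem_closedBall] using this
    simp only [mem_closedBall] at *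
    calc dist z x₀ ≤ dist z x + dist x x₀ := dist_triangle _ _ _
      _ ≤ t + R := add_le_add hz hxR
      _ = R + t := by ring
  have hpt : 1 < p.toReal := by
    have h := (ENNReal.toReal_lt_toReal (by simp) hp2).mpr hp1
    simpa using h
  set e : ℝ := 1 - 1/p.toReal with hee
  have he0 : 0 < e := by
    have h1 : 1/p.toReal < 1 := by rw [div_lt_one (by linarith)]; linarith
    rw [hee]; linarith
  set c : ℝ := mlow.toReal with hcdef
  have hc : 0 < c := ENNReal.toReal_pos mlow_pos.ne' mlow_ne_top
  set K : ℝ := ((C : ℝ≥0∞) * Mb ^ e).toReal with hKdef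
  have hK0 : 0 ≤ K := ENNReal.toReal_nonneg
  set C' : ℝ := (C : ℝ) with hC'def
  have hC'0 : 0 ≤ C' := C.coe_nonneg
  set η₁ : ℝ≥0∞ := ENNReal.ofReal (ε * c * c / (2 * (K + 1))) with hη₁def
  set η₂ : ℝ≥0∞ := (ENNReal.ofReal (ε * c / (4 * (C' + 1)))) ^ (1/e) with hη₂def
  have hη₁pos : 0 < η₁ := ENNReal.ofReal_pos.mpr (by positivity)
  have hη₂pos : 0 < η₂ :=
    ENNReal.rpow_pos (ENNReal.ofReal_pos.mpr (by positivity)) ENNReal.ofReal_ne_top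
  obtain ⟨δ, hδpos, hδ⟩ := hstart (min η₁ η₂) (lt_min hη₁pos hη₂pos)
  refine ⟨δ, hδpos, fun x hx y hy hxy f hfF => ?_⟩
  obtain ⟨hfmem, hfC⟩ := hF f hfF
  set Bx := closedBall x t with hBxdef
  set By := closedBall y t with hBydef
  set Δ : Set X := symmDiff Bx By with hΔdef
  have hμΔ : μ Δ < min η₁ η₂ := hδ x y hxy
  have hμΔ1 : μ Δ ≤ η₁ := (hμΔ.trans_le (min_le_left _ _)).le
  have hμΔ2 : μ Δ ≤ η₂ := (hμΔ.trans_le (min_le_right _ _)).le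
  have hΔtop : μ Δ ≠ ⊤ := (hμΔ1.trans_lt ENNReal.ofReal_lt_top).ne
  have hBxtop : μ Bx ≠ ⊤ := ((mh x hx).trans_lt Mb_ne_top.lt_top).ne
  have hBytop : μ By ≠ ⊤ := ((mh y hy).trans_lt Mb_ne_top.lt_top).ne
  set mx : ℝ := (μ Bx).toReal with hmxdef
  set my : ℝ := (μ By).toReal with hmydef
  have hcmx : c ≤ mx := (ENNReal.toReal_le_toReal mlow_ne_top hBxtop).mpr (mlow_le x hx)
  have hcmy : c ≤ my := (ENNReal.toReal_le_toReal mlow_ne_top hBytop).mpr (mlow_le y hy)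
  have hmx0 : 0 < mx := lt_of_lt_of_le hc hcmx
  have hmy0 : 0 < my := lt_of_lt_of_le hc hcmy
  set d : ℝ := (μ Δ).toReal with hddef
  have hd0 : 0 ≤ d := ENNReal.toReal_nonneg
  have hd : d ≤ ε * c * c / (2 * (K + 1)) := by
    have h := ENNReal.toReal_mono ENNReal.ofReal_ne_top hμΔ1
    rwa [ENNReal.toReal_ofReal (by positivity)] at h
  -- |mx - my| ≤ d
  have hsub1 : Bx ⊆ By ∪ Δ := by
    intro z hz
    by_cases h : z ∈ By
    · exact Or.inl h
    · exact Or.inr (Set.mem_symmDiff.mpr (Or.inl ⟨hz, h⟩))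
  have hsub2 : By ⊆ Bx ∪ Δ := by
    intro z hz
    by_cases h : z ∈ Bx
    · exact Or.inl h
    · exact Or.inr (Set.mem_symmDiff.mpr (Or.inr ⟨hz, h⟩))
  have hmxy : mx ≤ my + d := by
    have h1 : μ Bx ≤ μ By + μ Δ := (measure_mono hsub1).trans (measure_union_le _ _)
    have h2 := ENNReal.toReal_mono (by finiteness) h1
    rwa [ENNReal.toReal_add hBytop hΔtop] at h2
  have hmyx : my ≤ mx + d := by
    have h1 : μ By ≤ μ Bx + μ Δ := (measure_mono hsub2).trans (measure_union_le _ _)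
    have h2 := ENNReal.toReal_mono (by finiteness) h1
    rwa [ENNReal.toReal_add hBxtop hΔtop] at h2
  have hinv : |mx⁻¹ - my⁻¹| ≤ d / (c * c) := by
    have h : mx⁻¹ - my⁻¹ = (my - mx) / (mx * my) := by field_simp
    rw [h, abs_div, abs_of_pos (by positivity : (0:ℝ) < mx * my)]
    have h2 : |my - mx| ≤ d := abs_sub_le_iff.mpr ⟨by linarith, by linarith⟩
    exact div_le_div₀ hd0 h2 (by positivity) (mul_le_mul hcmx hcmy hc.le hmx0.le)
  set Ix : ℝ := ∫ z in Bx, f z ∂μ with hIxdef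
  set Iy : ℝ := ∫ z in By, f z ∂μ with hIydef
  have hIx : |Ix| ≤ K := by
    have h := int_bound μ hp1.le hfmem.aestronglyMeasurable hfC hee he0.le Bx hBxtop
    refine h.trans (ENNReal.toReal_mono ?_ ?_)
    · exact ENNReal.mul_ne_top coe_ne_top (ENNReal.rpow_ne_top_of_nonneg he0.le Mb_ne_top)
    · exact mul_le_mul_right (ENNReal.rpow_le_rpow (mh x hx) he0.le) _
  -- decomposition via measurable hull of Δ
  set D : Set X := toMeasurable μ Δ with hDdef
  have hDmeas : MeasurableSet D := measurableSet_toMeasurable μ Δ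
  have hμD : μ D = μ Δ := measure_toMeasurable Δ
  have hdecomp : ∀ s : Set X, μ s ≠ ⊤ →
      ∫ z in s, f z ∂μ = (∫ z in D ∩ s, f z ∂μ) + ∫ z in Dᶜ ∩ s, f z ∂μ := by
    intro s hs
    have hfin : ∀ u : Set X, IsFiniteMeasure (μ.restrict (u ∩ s)) := fun u =>
      ⟨by rw [Measure.restrict_apply_univ]; exact (measure_mono inter_subset_right).trans_lt hs.lt_top⟩
    haveI := hfin D; haveI := hfin Dᶜ
    have hint1 : Integrable f (μ.restrict (D ∩ s)) := (hfmem.restrict _).integrable hp1.le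
    have hint2 : Integrable f (μ.restrict (Dᶜ ∩ s)) := (hfmem.restrict _).integrable hp1.le
    have h := Measure.restrict_add_restrict_compl (μ := μ.restrict s) (s := D) hDmeas
    rw [Measure.restrict_restrict hDmeas, Measure.restrict_restrict hDmeas.compl] at h
    rw [← h]
    exact integral_add_measure hint1 hint2
  have hset : Dᶜ ∩ Bx = Dᶜ ∩ By := by
    have hΔD : Δ ⊆ D := subset_toMeasurable μ Δ
    ext z
    simp only [mem_inter_iff, mem_compl_iff]
    constructor
    · rintro ⟨hzD, hzBx⟩
      refine ⟨hzD, ?_⟩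
      by_contra h
      exact hzD (hΔD (Set.mem_symmDiff.mpr (Or.inl ⟨hzBx, h⟩)))
    · rintro ⟨hzD, hzBy⟩
      refine ⟨hzD, ?_⟩
      by_contra h
      exact hzD (hΔD (Set.mem_symmDiff.mpr (Or.inr ⟨hzBy, h⟩)))
  have hIxIy : Ix - Iy = (∫ z in D ∩ Bx, f z ∂μ) - ∫ z in D ∩ By, f z ∂μ := by
    rw [hIxdef, hIydef, hdecomp Bx hBxtop, hdecomp By hBytop, hset]; ring
  set J : ℝ := ((C : ℝ≥0∞) * μ Δ ^ e).toReal with hJdef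
  have hpiece : ∀ A : Set X, μ A ≤ μ Δ → |∫ z in A, f z ∂μ| ≤ J := by
    intro A hA
    have h := int_bound μ hp1.le hfmem.aestronglyMeasurable hfC hee he0.le A
      (hA.trans_lt hΔtop.lt_top).ne
    refine h.trans (ENNReal.toReal_mono ?_ ?_)
    · exact ENNReal.mul_ne_top coe_ne_top (ENNReal.rpow_ne_top_of_nonneg he0.le hΔtop)
    · exact mul_le_mul_right (ENNReal.rpow_le_rpow hA he0.le) _
  have hJ0 : 0 ≤ J := ENNReal.toReal_nonneg
  have hJ : J ≤ C' * (ε * c / (4 * (C' + 1))) := by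
    have hη2e : η₂ ^ e = ENNReal.ofReal (ε * c / (4 * (C' + 1))) := by
      rw [hη₂def, ← ENNReal.rpow_mul, one_div, inv_mul_cancel₀ he0.ne', ENNReal.rpow_one]
    have h1 : μ Δ ^ e ≤ η₂ ^ e := ENNReal.rpow_le_rpow hμΔ2 he0.le
    rw [hJdef, ENNReal.toReal_mul, coe_toReal]
    have h2 : (μ Δ ^ e).toReal ≤ ε * c / (4 * (C' + 1)) := by
      have := ENNReal.toReal_mono (by rw [hη2e]; exact ENNReal.ofReal_ne_top) h1
      rwa [hη2e, ENNReal.toReal_ofReal (by positivity)] at this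
    exact mul_le_mul_of_nonneg_left h2 hC'0
  have hIdiff : |Ix - Iy| ≤ J + J := by
    rw [hIxIy]
    refine (abs_sub _ _).trans (add_le_add ?_ ?_) <;>
      exact hpiece _ (by rw [← hμD]; exact measure_mono inter_subset_left)
  have key : avgOp μ t f x - avgOp μ t f y = (mx⁻¹ - my⁻¹) * Ix + my⁻¹ * (Ix - Iy) := by
    simp only [avgOp, ← hBxdef, ← hBydef, ← hmxdef, ← hmydef, ← hIxdef, ← hIydef]
    ring
  have hT1 : |mx⁻¹ - my⁻¹| * |Ix| < ε / 2 := by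
    have h1 : |mx⁻¹ - my⁻¹| * |Ix| ≤ (d / (c * c)) * K :=
      mul_le_mul hinv hIx (abs_nonneg _) (by positivity)
    have h2 : (d / (c * c)) * K < ε / 2 := by
      rw [div_mul_eq_mul_div, div_lt_div_iff₀ (by positivity) (by norm_num)]
      have hd' : d * (2 * (K + 1)) ≤ ε * c * c := by
        rw [← le_div_iff₀ (by positivity)]; exact hd
      have hd'' : d * K * 2 + d * 2 ≤ ε * c * c := by linarith [hd']
      rcases eq_or_lt_of_le hd0 with h0 | h0
      · have : d = 0 := h0.symm
        rw [this]
        have : (0:ℝ) < ε * (c * c) := by positivity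
        linarith
      · linarith
    linarith
  have hT2 : my⁻¹ * |Ix - Iy| < ε / 2 := by
    have h1 : my⁻¹ * |Ix - Iy| ≤ c⁻¹ * (J + J) :=
      mul_le_mul (inv_anti₀ hc hcmy) hIdiff (abs_nonneg _) (by positivity)
    have h2 : c⁻¹ * (J + J) < ε / 2 := by
      have h3 : c⁻¹ * (J + J) ≤ c⁻¹ * (2 * (C' * (ε * c / (4 * (C' + 1))))) := by
        have : J + J ≤ 2 * (C' * (ε * c / (4 * (C' + 1)))) := by linarith
        exact mul_le_mul_of_nonneg_left this (by positivity)
      have h4 : c⁻¹ * (2 * (C' * (ε * c / (4 * (C' + 1))))) = ε * C' / (2 * (C' + 1)) := by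
        field_simp; ring
      have h5 : ε * C' / (2 * (C' + 1)) < ε / 2 := by
        rw [div_lt_div_iff₀ (by positivity) (by norm_num)]
        linarith
      linarith
    linarith
  calc |avgOp μ t f x - avgOp μ t f y|
      = |(mx⁻¹ - my⁻¹) * Ix + my⁻¹ * (Ix - Iy)| := by rw [key]
    _ ≤ |(mx⁻¹ - my⁻¹) * Ix| + |my⁻¹ * (Ix - Iy)| := abs_add_le _ _
    _ = |mx⁻¹ - my⁻¹| * |Ix| + my⁻¹ * |Ix - Iy| := by
        rw [abs_mul, abs_mul, abs_of_nonneg (inv_nonneg.mpr hmy0.le)]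
    _ < ε := by linarith
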